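/- arXiv:1907.08574 — 9 statements merged into one kernel-verified Lean document; each statement's English description precedes it below -/
import Mathlib

section
/- Let n ≥ 1 and let P_1, …, P_n be complex d×d matrices that are orthogonal projections (Hermitian, idempotent), pairwise orthogonal (P_i P_j = 0 for i ≠ j), and satisfy ∑_{i=1}^n P_i = 1. Then for every positive semidefinite d×d matrix ρ, the matrix n·∑_{i=1}^n P_i ρ P_i − ρ is positive semidefinite; equivalently, ρ ≤ n·Δ[ρ] in the Loewner order, where Δ[ρ] = ∑_i P_i ρ P_i. -/
/-!
The matrix `∑ i, ∑ j, (P i - P j) * ρ * (P i - P j)ᴴ` is positive semidefinite, and expanding it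
with `(P i)ᴴ = P i` and `∑ i, P i = 1` shows that it equals `2 • (n • Δ[ρ] - ρ)`.
-/

open Matrix
open scoped ComplexOrder

theorem Finset.sum_sum_sub_mul_mul_sub {ι R : Type*} [Fintype ι] [Ring R]
    (a b : ι → R) (x : R) :
    ∑ i, ∑ j, (a i - a j) * x * (b i - b j) =
      2 • (Fintype.card ι • ∑ i, a i * x * b i - (∑ i, a i) * x * ∑ i, b i) := by
  simp only [sub_mul, mul_sub, Finset.sum_sub_distrib, Finset.sum_const, Finset.card_univ,
    Finset.mul_sum, Finset.sum_mul]
  rw [← Finset.smul_sum, Finset.sum_comm (f := fun i j => a i * x * b j)]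
  abel

theorem psd_n_smul_dephasing_sub_self_general
    (n d : ℕ) (P : Fin n → Matrix (Fin d) (Fin d) ℂ)
    (hherm : ∀ i, (P i)ᴴ = P i)
    (hsum : ∑ i, P i = 1) :
    ∀ ρ : Matrix (Fin d) (Fin d) ℂ, ρ.PosSemidef →
      ((n : ℂ) • (∑ i, P i * ρ * P i) - ρ).PosSemidef := by
  intro ρ hρ
  have hspread : (∑ i, ∑ j, (P i - P j) * ρ * (P i - P j)ᴴ).PosSemidef :=
    posSemidef_sum _ fun i _ ↦ posSemidef_sum _ fun j _ ↦ hρ.mul_mul_conjTranspose_same _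
  have hexpand : ∑ i, ∑ j, (P i - P j) * ρ * (P i - P j)ᴴ =
      (2 : ℂ) • ((n : ℂ) • (∑ i, P i * ρ * P i) - ρ) := by
    simp only [conjTranspose_sub, hherm]
    rw [Finset.sum_sum_sub_mul_mul_sub, hsum, one_mul, mul_one, Fintype.card_fin,
      ← Nat.cast_smul_eq_nsmul ℂ, ← Nat.cast_smul_eq_nsmul ℂ, Nat.cast_ofNat]
  have hhalf := hspread.smul (a := (2⁻¹ : ℂ)) (inv_nonneg.mpr zero_le_two)
  rwa [hexpand, smul_smul, inv_mul_cancel₀ two_ne_zero, one_smul] at hhalf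

/-- For pairwise orthogonal projections `P 1, …, P n` on `ℂ^d` summing to the
identity and any positive semidefinite `ρ`, the matrix `n • Δ[ρ] - ρ` is positive semidefinite,
where `Δ[ρ] = ∑ i, P i * ρ * P i` is the block-dephasing operation; i.e. `ρ ≤ n • Δ[ρ]`
in the Loewner order. -/
theorem psd_n_smul_dephasing_sub_self
    (n d : ℕ) (hn : 1 ≤ n) (P : Fin n → Matrix (Fin d) (Fin d) ℂ)
    (hherm : ∀ i, (P i)ᴴ = P i)
    (hidem : ∀ i, P i * P i = P i)
    (horth : ∀ i j, i ≠ j → P i * P j = 0)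
    (hsum : ∑ i, P i = 1) :
    ∀ ρ : Matrix (Fin d) (Fin d) ℂ, ρ.PosSemidef →
      ((n : ℂ) • (∑ i, P i * ρ * P i) - ρ).PosSemidef :=
  psd_n_smul_dephasing_sub_self_general n d P hherm hsum
end

section
/- Let P_1, …, P_n be pairwise orthogonal projections on ℂ^d (Hermitian, idempotent, P_i P_j = 0 for i ≠ j) with ∑_{i=1}^n P_i = 1, and let ρ be a density matrix on ℂ^d. Then the robustness of block coherence C_rob(ρ, P) := inf { s ≥ 0 : there exists a density matrix δ on ℂ^d with ρ ≤ (1 + s)·Δ[δ] } satisfies C_rob(ρ, P) ≤ n − 1. (In particular the set in the infimum is nonempty, witnessed by s = n − 1 and δ = ρ.) -/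
open Matrix
open scoped ComplexOrder

/-!
Take `δ = ρ` and `s = n - 1`. Whenever `∑ i, P i = 1`, expanding gives
`∑ i, ∑ j, (P i - P j) ρ (P i - P j) = 2 (n Δ[ρ] - ρ)`, and for Hermitian `P i` every summand on
the left is a congruence of `ρ`, hence positive semidefinite. So `ρ ≤ n Δ[ρ]`. The family cannot
be empty, since then `1 = 0` would force `ρ = 0`, contradicting `tr ρ = 1`.
-/

def blockDephasing {R ι : Type*} [Ring R] [Fintype ι] (P : ι → R) (a : R) : R :=
  ∑ i, P i * a * P i

theorem sum_sum_sub_mul_mul_sub_eq {R ι : Type*} [Ring R] [Fintype ι] {P : ι → R}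
    (hsum : ∑ i, P i = 1) (a : R) :
    ∑ i, ∑ j, (P i - P j) * a * (P i - P j) = 2 • (Fintype.card ι • blockDephasing P a - a) := by
  have hcross : ∑ i, ∑ j, P i * a * P j = a := by
    simp_rw [mul_assoc, ← Finset.mul_sum, ← Finset.sum_mul, hsum, one_mul, mul_one]
  have hexpand (i j : ι) : (P i - P j) * a * (P i - P j)
      = P i * a * P i + P j * a * P j - (P i * a * P j + P j * a * P i) := by
    noncomm_ring
  simp only [hexpand, Finset.sum_add_distrib, Finset.sum_sub_distrib, Finset.sum_const,
    Finset.card_univ, hcross]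
  rw [Finset.sum_comm (f := fun i j => P j * a * P i), hcross, blockDephasing, ← Finset.smul_sum]
  abel

theorem Matrix.PosSemidef.card_smul_blockDephasing_sub {𝕜 m ι : Type*} [RCLike 𝕜] [Fintype m]
    [DecidableEq m] [Fintype ι] {P : ι → Matrix m m 𝕜} (hP : ∀ i, (P i).IsHermitian)
    (hsum : ∑ i, P i = 1) {A : Matrix m m 𝕜} (hA : A.PosSemidef) :
    (Fintype.card ι • blockDephasing P A - A).PosSemidef := by
  have htwice : (2 • (Fintype.card ι • blockDephasing P A - A)).PosSemidef := by
    rw [← sum_sum_sub_mul_mul_sub_eq hsum]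
    refine posSemidef_sum _ fun i _ => posSemidef_sum _ fun j _ => ?_
    simpa only [conjTranspose_sub, (hP i).eq, (hP j).eq] using
      hA.mul_mul_conjTranspose_same (P i - P j)
  have hhalf := htwice.smul (a := (2⁻¹ : 𝕜)) (by positivity)
  rwa [← Nat.cast_smul_eq_nsmul 𝕜 2, smul_smul, Nat.cast_ofNat, inv_mul_cancel₀ two_ne_zero,
    one_smul] at hhalf

theorem robustness_of_block_coherence_le_general
    (n d : ℕ) (P : Fin n → Matrix (Fin d) (Fin d) ℂ)
    (hherm : ∀ i, (P i)ᴴ = P i)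
    (hsum : ∑ i, P i = 1)
    (ρ : Matrix (Fin d) (Fin d) ℂ) (hρ : ρ.PosSemidef) (hρtr : ρ.trace = 1) :
    sInf { s : ℝ | 0 ≤ s ∧ ∃ δ : Matrix (Fin d) (Fin d) ℂ, δ.PosSemidef ∧ δ.trace = 1 ∧
        ((1 + s) • (∑ i, P i * δ * P i) - ρ).PosSemidef }
      ≤ (n : ℝ) - 1 := by
  have hn : 1 ≤ n := by
    refine Nat.one_le_iff_ne_zero.mpr fun hn0 => ?_
    subst hn0
    have hρ0 : ρ = 0 := by
      rw [← mul_one ρ, ← hsum, Finset.univ_eq_empty, Finset.sum_empty, mul_zero]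
    simp [hρ0] at hρtr
  refine csInf_le ⟨0, fun s hs => hs.1⟩ ⟨sub_nonneg.mpr (mod_cast hn), ρ, hρ, hρtr, ?_⟩
  rw [add_sub_cancel, Nat.cast_smul_eq_nsmul]
  have hpinch := hρ.card_smul_blockDephasing_sub hherm hsum
  rw [Fintype.card_fin] at hpinch
  exact hpinch

/-- For pairwise orthogonal projections `P 1, …, P n` on `ℂ^d` summing to the
identity and a density matrix `ρ`, the robustness of block coherence
`C_rob(ρ, P) = inf { s ≥ 0 : ∃ density matrix δ, ρ ≤ (1 + s) • Δ[δ] }` is at most `n - 1`,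
where `Δ[δ] = ∑ i, P i * δ * P i` and `≤` is the Loewner order. -/
theorem robustness_of_block_coherence_le
    (n d : ℕ) (P : Fin n → Matrix (Fin d) (Fin d) ℂ)
    (hherm : ∀ i, (P i)ᴴ = P i)
    (hidem : ∀ i, P i * P i = P i)
    (horth : ∀ i j, i ≠ j → P i * P j = 0)
    (hsum : ∑ i, P i = 1)
    (ρ : Matrix (Fin d) (Fin d) ℂ) (hρ : ρ.PosSemidef) (hρtr : ρ.trace = 1) :
    sInf { s : ℝ | 0 ≤ s ∧ ∃ δ : Matrix (Fin d) (Fin d) ℂ, δ.PosSemidef ∧ δ.trace = 1 ∧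
        ((1 + s) • (∑ i, P i * δ * P i) - ρ).PosSemidef }
      ≤ (n : ℝ) - 1 :=
  robustness_of_block_coherence_le_general n d P hherm hsum ρ hρ hρtr
end

section
/- Let P_1, …, P_n (n ≥ 1) be pairwise orthogonal projections on ℂ^d with ∑_i P_i = 1, and let φ_1, …, φ_n be unit vectors in ℂ^d with P_i φ_i = φ_i for each i. Define the maximally coherent state vector Ψ = (1/√n)·∑_{i=1}^n φ_i. Then ∑_{i ≠ j} ‖ P_i (Ψ Ψ†) P_j ‖₁ = n − 1, where Ψ Ψ† denotes the rank-one matrix with entries Ψ_a · conj(Ψ_b). -/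
open Matrix
open scoped ComplexOrder

/-- The trace norm `‖A‖₁ = tr √(Aᴴ A)` of a complex matrix. -/
noncomputable def traceNorm {m n : Type*} [Fintype m] [Fintype n] [DecidableEq n]
    (A : Matrix m n ℂ) : ℝ :=
  (((Matrix.posSemidef_conjTranspose_mul_self A).1.eigenvectorUnitary : Matrix n n ℂ) *
      diagonal ((fun x : ℝ => (x : ℂ)) ∘ (√·) ∘ (Matrix.posSemidef_conjTranspose_mul_self A).1.eigenvalues) *
      (star ((Matrix.posSemidef_conjTranspose_mul_self A).1.eigenvectorUnitary : Matrix n n ℂ))).trace.re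

/-!
Orthogonality of the projections and `P i φ i = φ i` give `P i Ψ = n^{-1/2} φ i`, so every
off-diagonal block is the rank-one matrix `n⁻¹ φ i φ jᴴ`. For unit vectors `x, y` the matrix
`A = c x yᴴ` has `Aᴴ A = |c|² y yᴴ`, whose positive square root is `|c| y yᴴ`, so `‖A‖₁ = |c|`.
Each of the `n(n-1)` off-diagonal blocks therefore contributes `1/n`.
-/

namespace Matrix

theorem mul_vecMulVec_star_mul_of_isHermitian {α l n : Type*} [Fintype n] [NonUnitalSemiring α]
    [StarRing α] (Q : Matrix l n α) {R : Matrix n n α} (hR : R.IsHermitian) (u : n → α) :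
    Q * vecMulVec u (star u) * R = vecMulVec (Q *ᵥ u) (star (R *ᵥ u)) := by
  rw [mul_vecMulVec, vecMulVec_mul, star_mulVec, hR.eq]

theorem mulVec_sum_eq_of_mul_eq_zero {α ι n : Type*} [Fintype ι] [Fintype n] [NonUnitalSemiring α]
    {P : ι → Matrix n n α} {φ : ι → n → α} (horth : ∀ i j, i ≠ j → P i * P j = 0)
    (hsupp : ∀ i, P i *ᵥ φ i = φ i) (i : ι) :
    P i *ᵥ ∑ k, φ k = φ i := by
  classical
  rw [mulVec_sum, Finset.sum_eq_single i _ (by simp), hsupp]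
  intro k _ hki
  rw [← hsupp k, mulVec_mulVec, horth i k hki.symm, zero_mulVec]

end Matrix

open scoped MatrixOrder in
theorem traceNorm_eq_re_trace_of_mul_self_eq {m n : Type*} [Fintype m] [Fintype n] [DecidableEq n]
    {A : Matrix m n ℂ} {S : Matrix n n ℂ} (hS : S.PosSemidef) (h : S * S = Aᴴ * A) :
    traceNorm A = S.trace.re := by
  -- `traceNorm` is the spectral form of `CFC.sqrt (Aᴴ * A)`; PSD square roots are unique.
  have hB := posSemidef_conjTranspose_mul_self A
  have hsqrt : CFC.sqrt (Aᴴ * A) = S := CFC.sqrt_unique h hS.nonneg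
  rw [CFC.sqrt_eq_real_sqrt _ hB.nonneg, cfcₙ_eq_cfc, hB.1.cfc_eq] at hsqrt
  rw [traceNorm, ← hsqrt]
  rfl

theorem traceNorm_smul_vecMulVec_star {m n : Type*} [Fintype m] [Fintype n] [DecidableEq n]
    (c : ℂ) {x : m → ℂ} {y : n → ℂ} (hx : star x ⬝ᵥ x = 1) (hy : star y ⬝ᵥ y = 1) :
    traceNorm (c • vecMulVec x (star y)) = ‖c‖ := by
  have hS : ((‖c‖ : ℂ) • vecMulVec y (star y)).PosSemidef :=
    (posSemidef_vecMulVec_self_star y).smul (by positivity)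
  rw [traceNorm_eq_re_trace_of_mul_self_eq hS]
  · rw [trace_smul, trace_vecMulVec, dotProduct_comm, hy]
    simp
  · simp only [conjTranspose_smul, conjTranspose_vecMulVec, star_star, Matrix.smul_mul,
      Matrix.mul_smul, smul_smul, vecMulVec_mul_vecMulVec, hx, hy, one_smul, RCLike.star_def,
      Complex.mul_conj', sq]

theorem l1_block_coherence_maximally_coherent_state_general
    (n d : ℕ) (hn : 1 ≤ n) (P : Fin n → Matrix (Fin d) (Fin d) ℂ)
    (hherm : ∀ i, (P i)ᴴ = P i)
    (horth : ∀ i j, i ≠ j → P i * P j = 0)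
    (φ : Fin n → (Fin d → ℂ))
    (hunit : ∀ i, star (φ i) ⬝ᵥ φ i = 1)
    (hsupp : ∀ i, (P i).mulVec (φ i) = φ i)
    (Ψ : Fin d → ℂ) (hΨ : Ψ = ((Real.sqrt n : ℂ))⁻¹ • ∑ i, φ i) :
    ∑ p ∈ (Finset.univ : Finset (Fin n)).offDiag,
        traceNorm (P p.1 * Matrix.vecMulVec Ψ (star Ψ) * P p.2) = (n : ℝ) - 1 := by
  have hPΨ (i : Fin n) : P i *ᵥ Ψ = ((Real.sqrt n : ℂ))⁻¹ • φ i := by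
    rw [hΨ, mulVec_smul, mulVec_sum_eq_of_mul_eq_zero horth hsupp]
  have hblock (i j : Fin n) : traceNorm (P i * vecMulVec Ψ (star Ψ) * P j) = (n : ℝ)⁻¹ := by
    rw [mul_vecMulVec_star_mul_of_isHermitian _ (hherm j), hPΨ, hPΨ, star_smul, smul_vecMulVec,
      vecMulVec_smul, smul_smul, traceNorm_smul_vecMulVec_star _ (hunit i) (hunit j),
      norm_mul, norm_star, norm_inv, Complex.norm_real, Real.norm_of_nonneg (Real.sqrt_nonneg _),
      ← mul_inv, Real.mul_self_sqrt n.cast_nonneg]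
  have hn0 : (n : ℝ) ≠ 0 := Nat.cast_ne_zero.mpr (by omega)
  rw [Finset.sum_congr rfl fun p _ => hblock p.1 p.2, Finset.sum_const, Finset.offDiag_card,
    Finset.card_univ, Fintype.card_fin, nsmul_eq_mul, Nat.cast_sub (Nat.le_mul_self n)]
  field_simp
  push_cast
  ring

/-- For pairwise orthogonal projections `P i` summing to the identity and unit
vectors `φ i` with `P i φ i = φ i`, the maximally coherent state `Ψ = (1/√n) ∑ i, φ i` has
`ℓ₁`-norm of block coherence `∑_{i ≠ j} ‖P i (Ψ Ψᴴ) P j‖₁ = n - 1`. -/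
theorem l1_block_coherence_maximally_coherent_state
    (n d : ℕ) (hn : 1 ≤ n) (P : Fin n → Matrix (Fin d) (Fin d) ℂ)
    (hherm : ∀ i, (P i)ᴴ = P i)
    (hidem : ∀ i, P i * P i = P i)
    (horth : ∀ i j, i ≠ j → P i * P j = 0)
    (hsum : ∑ i, P i = 1)
    (φ : Fin n → (Fin d → ℂ))
    (hunit : ∀ i, star (φ i) ⬝ᵥ φ i = 1)
    (hsupp : ∀ i, (P i).mulVec (φ i) = φ i)
    (Ψ : Fin d → ℂ) (hΨ : Ψ = ((Real.sqrt n : ℂ))⁻¹ • ∑ i, φ i) :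
    ∑ p ∈ (Finset.univ : Finset (Fin n)).offDiag,
        traceNorm (P p.1 * Matrix.vecMulVec Ψ (star Ψ) * P p.2) = (n : ℝ) - 1 :=
  l1_block_coherence_maximally_coherent_state_general n d hn P hherm horth φ hunit hsupp Ψ hΨ
end

section
/- Let A_1, …, A_n be complex d×d matrices, ψ ∈ ℂ^d a unit vector, and suppose for each i there are a real p_i ≥ 0 and a unit vector φ_i ∈ ℂ^d with A_i ψ = √p_i · φ_i. Then ∑_{i ≠ j} tr( (φ_j φ_i†) · A_i (ψψ†) A_j† ) = ∑_{i ≠ j} √(p_i p_j). Consequently, the dual-feasible matrix X̃ built from the vectors φ_i certifies C_rob(ψψ†, E) ≥ ∑_{i≠j} √(p_i p_j) for the POVM with measurement operators A_i. -/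
/-! The trace of a product of rank-one matrices factors into inner products, so the `(i, j)`
summand is `(φ iᴴ A i ψ) (ψᴴ (A j)ᴴ φ j)`; since `A i ψ = √(p i) φ i` with `φ i` a unit vector,
these factors are `√(p i)` and `√(p j)`. -/

open Matrix

namespace Matrix

variable {l m k k' α : Type*} [Fintype l] [Fintype m] [Fintype k] [Fintype k']
  [CommSemiring α] [StarRing α]

theorem trace_vecMulVec_mul_mul_vecMulVec_star_mul_conjTranspose (u : l → α) (v : m → α)
    (M : Matrix m k α) (x : k → α) (N : Matrix l k' α) (y : k' → α) :
    (vecMulVec u v * (M * vecMulVec x (star y) * Nᴴ)).trace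
      = (v ⬝ᵥ M *ᵥ x) * (u ⬝ᵥ star (N *ᵥ y)) := by
  rw [mul_vecMulVec, vecMulVec_mul (M *ᵥ x), vecMul_conjTranspose, star_star,
    vecMulVec_mul_vecMulVec, trace_vecMulVec, dotProduct_smul, smul_eq_mul]

end Matrix

theorem dual_certificate_trace_identity_pure_state_general
    (n d : ℕ) (A : Fin n → Matrix (Fin d) (Fin d) ℂ)
    (ψ : Fin d → ℂ)
    (p : Fin n → ℝ) (hp0 : ∀ i, 0 ≤ p i)
    (φ : Fin n → (Fin d → ℂ)) (hφ : ∀ i, star (φ i) ⬝ᵥ φ i = 1)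
    (hAψ : ∀ i, (A i).mulVec ψ = ((Real.sqrt (p i) : ℂ)) • φ i) :
    ∑ q ∈ (Finset.univ : Finset (Fin n)).offDiag,
        (Matrix.vecMulVec (φ q.2) (star (φ q.1)) *
          (A q.1 * Matrix.vecMulVec ψ (star ψ) * (A q.2)ᴴ)).trace
      = ((∑ q ∈ (Finset.univ : Finset (Fin n)).offDiag,
          Real.sqrt (p q.1 * p q.2) : ℝ) : ℂ) := by
  push_cast
  refine Finset.sum_congr rfl fun ⟨i, j⟩ _ => ?_
  rw [trace_vecMulVec_mul_mul_vecMulVec_star_mul_conjTranspose, hAψ i, hAψ j, star_smul,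
    dotProduct_smul, dotProduct_smul, hφ i, dotProduct_comm, hφ j, Real.sqrt_mul (hp0 i)]
  simp

/-- Let `A 1, …, A n` be matrices and `ψ` a unit vector with
`A i ψ = √(p i) • φ i` for reals `p i ≥ 0` and unit vectors `φ i`. Then
`∑_{i ≠ j} tr((φ j φ iᴴ) · A i (ψψᴴ) A jᴴ) = ∑_{i ≠ j} √(p i * p j)`. -/
theorem dual_certificate_trace_identity_pure_state
    (n d : ℕ) (A : Fin n → Matrix (Fin d) (Fin d) ℂ)
    (ψ : Fin d → ℂ) (hψ : star ψ ⬝ᵥ ψ = 1)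
    (p : Fin n → ℝ) (hp0 : ∀ i, 0 ≤ p i)
    (φ : Fin n → (Fin d → ℂ)) (hφ : ∀ i, star (φ i) ⬝ᵥ φ i = 1)
    (hAψ : ∀ i, (A i).mulVec ψ = ((Real.sqrt (p i) : ℂ)) • φ i) :
    ∑ q ∈ (Finset.univ : Finset (Fin n)).offDiag,
        (Matrix.vecMulVec (φ q.2) (star (φ q.1)) *
          (A q.1 * Matrix.vecMulVec ψ (star ψ) * (A q.2)ᴴ)).trace
      = ((∑ q ∈ (Finset.univ : Finset (Fin n)).offDiag,
          Real.sqrt (p q.1 * p q.2) : ℝ) : ℂ) :=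
  dual_certificate_trace_identity_pure_state_general n d A ψ p hp0 φ hφ hAψ
end

section
/- Let T be a d'×d complex matrix with T† T = 1 (the d×d identity), and set Π = T T† (a projection on ℂ^{d'}). Let K' be a d'×d' matrix satisfying the subspace-preserving property K' Π = Π K' Π, and define K = T† K' T. Then for every d×d matrix ρ one has T (K ρ K†) T† = K' (T ρ T†) (K')†. In other words, embedding the output of the compressed Kraus operator K agrees with applying K' to the embedded state. -/
open Matrix

/-! The subspace-preserving condition makes the isometry `T` intertwine the compression
`K = Tᴴ K' T` with `K'`, i.e. `T K = K' T`; taking adjoints gives `Kᴴ Tᴴ = Tᴴ K'ᴴ`, and the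
identity follows by reassociating `T (K ρ Kᴴ) Tᴴ = (T K) ρ (Kᴴ Tᴴ)`. -/

namespace Matrix

variable {m n α : Type*} [Fintype m] [Fintype n]

theorem mul_compress_eq_of_mul_proj_eq [DecidableEq n] [Semiring α] {T : Matrix m n α}
    {S : Matrix n m α} {A : Matrix m m α} (hST : S * T = 1)
    (hA : A * (T * S) = T * S * A * (T * S)) :
    T * (S * A * T) = A * T :=
  calc T * (S * A * T) = T * S * A * (T * (S * T)) := by
        rw [hST, Matrix.mul_one]; simp only [Matrix.mul_assoc]
    _ = T * S * A * (T * S) * T := by simp only [Matrix.mul_assoc]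
    _ = A * (T * S) * T := by rw [← hA]
    _ = A * (T * (S * T)) := by simp only [Matrix.mul_assoc]
    _ = A * T := by rw [hST, Matrix.mul_one]

theorem conj_eq_conj_of_mul_eq_mul [Semiring α] [StarRing α] {T : Matrix m n α}
    {K : Matrix n n α} {A : Matrix m m α} (h : T * K = A * T) (ρ : Matrix n n α) :
    T * (K * ρ * Kᴴ) * Tᴴ = A * (T * ρ * Tᴴ) * Aᴴ := by
  have hH : Kᴴ * Tᴴ = Tᴴ * Aᴴ := by rw [← conjTranspose_mul, h, conjTranspose_mul]
  calc T * (K * ρ * Kᴴ) * Tᴴ = T * K * ρ * (Kᴴ * Tᴴ) := by simp only [Matrix.mul_assoc]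
    _ = A * T * ρ * (Tᴴ * Aᴴ) := by rw [h, hH]
    _ = A * (T * ρ * Tᴴ) * Aᴴ := by simp only [Matrix.mul_assoc]

end Matrix

/-- Let `T` be a `d' × d` isometry (`Tᴴ T = 1`), `Π = T Tᴴ` the projector on
the embedded subspace, and `K'` a subspace-preserving operator (`K' Π = Π K' Π`). Then the
compressed Kraus operator `K = Tᴴ K' T` satisfies
`T (K ρ Kᴴ) Tᴴ = K' (T ρ Tᴴ) K'ᴴ` for every `d × d` matrix `ρ`. -/
theorem embed_compressed_kraus_eq
    (d d' : ℕ) (T : Matrix (Fin d') (Fin d) ℂ) (hT : Tᴴ * T = 1)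
    (K' : Matrix (Fin d') (Fin d') ℂ)
    (hsp : K' * (T * Tᴴ) = (T * Tᴴ) * K' * (T * Tᴴ))
    (K : Matrix (Fin d) (Fin d) ℂ) (hK : K = Tᴴ * K' * T) :
    ∀ ρ : Matrix (Fin d) (Fin d) ℂ,
      T * (K * ρ * Kᴴ) * Tᴴ = K' * (T * ρ * Tᴴ) * K'ᴴ := by
  subst hK
  exact conj_eq_conj_of_mul_eq_mul (mul_compress_eq_of_mul_proj_eq hT hsp)
end

section
/- Let P_1, …, P_n be Hermitian projections on ℂ^{d'} and P̂_1, …, P̂_n be Hermitian projections on ℂ^{d̂'}. Let Q be a d'×d̂' matrix with Q† Q = 1 and P_i Q = Q P̂_i for all i, and let U be a d'×d' unitary with U P_i = P_i U for all i. Suppose K' is a d'×d' matrix and f : {1,…,n} → {1,…,n} a function such that K' P_i = P_{f(i)} K' P_i for all i. Then the matrix K̂ = Q† U K' U† Q on ℂ^{d̂'} satisfies K̂ P̂_i = P̂_{f(i)} K̂ P̂_i for all i; that is, K̂ is block-incoherent with respect to {P̂_i} with the same index function f. -/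
/-!
Both `U` and `Q` intertwine the two families of projections (`P i * Uᴴ * Q = Uᴴ * Q * P̂ i`, and
by taking adjoints of Hermitian matrices `P̂ i * Qᴴ * U = Qᴴ * U * P i`), and sandwiching a
block-incoherent matrix between two intertwiners keeps it block-incoherent with the same index
function.
-/

open Matrix

namespace Matrix

variable {ι l m n α : Type*} [Fintype l] [Fintype m] [Fintype n]

def IsBlockIncoherent [Mul α] [AddCommMonoid α] (P : ι → Matrix m m α) (f : ι → ι)
    (K : Matrix m m α) : Prop :=
  ∀ i, K * P i = P (f i) * K * P i

theorem mul_intertwine_of_intertwine [NonUnitalSemiring α] {X : Matrix l l α}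
    {Y : Matrix m m α} {Z : Matrix n n α} {A : Matrix l m α} {B : Matrix m n α}
    (hA : X * A = A * Y) (hB : Y * B = B * Z) : X * (A * B) = A * B * Z := by
  rw [← Matrix.mul_assoc, hA, Matrix.mul_assoc, hB, Matrix.mul_assoc]

theorem conjTranspose_intertwine_of_intertwine [NonUnitalSemiring α] [StarRing α]
    {X : Matrix m m α} {Y : Matrix n n α} {A : Matrix m n α} (hXA : X * A = A * Y)
    (hX : X.IsHermitian) (hY : Y.IsHermitian) : Y * Aᴴ = Aᴴ * X := by
  simpa only [conjTranspose_mul, hX.eq, hY.eq] using (congrArg conjTranspose hXA).symm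

theorem IsBlockIncoherent.mul_mul [NonUnitalSemiring α] {P : ι → Matrix m m α}
    {R : ι → Matrix n n α} {f : ι → ι} {K : Matrix m m α} (hK : IsBlockIncoherent P f K)
    {A : Matrix m n α} {B : Matrix n m α} (hA : ∀ i, P i * A = A * R i)
    (hB : ∀ i, R i * B = B * P i) : IsBlockIncoherent R f (B * K * A) := fun i => by
  calc B * K * A * R i = B * (K * P i * A) := by simp only [Matrix.mul_assoc, hA]
    _ = B * (P (f i) * K * P i * A) := by rw [hK i]
    _ = R (f i) * (B * K * A) * R i := by
      simp only [← Matrix.mul_assoc, ← hB]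
      simp only [Matrix.mul_assoc, hA]

end Matrix

theorem transported_kraus_block_incoherent_general
    (n d' e' : ℕ)
    (P : Fin n → Matrix (Fin d') (Fin d') ℂ)
    (Phat : Fin n → Matrix (Fin e') (Fin e') ℂ)
    (hP : ∀ i, (P i)ᴴ = P i)
    (hPhat : ∀ i, (Phat i)ᴴ = Phat i)
    (Q : Matrix (Fin d') (Fin e') ℂ)
    (hQP : ∀ i, P i * Q = Q * Phat i)
    (U : Matrix (Fin d') (Fin d') ℂ)
    (hUP : ∀ i, U * P i = P i * U)
    (K' : Matrix (Fin d') (Fin d') ℂ) (f : Fin n → Fin n)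
    (hinc : ∀ i, K' * P i = P (f i) * K' * P i) :
    ∀ i, (Qᴴ * U * K' * Uᴴ * Q) * Phat i
        = Phat (f i) * (Qᴴ * U * K' * Uᴴ * Q) * Phat i := by
  have hPU (i : Fin n) : P i * U = U * P i := (hUP i).symm
  have hPUh (i : Fin n) : P i * Uᴴ = Uᴴ * P i :=
    conjTranspose_intertwine_of_intertwine (hPU i) (hP i) (hP i)
  have hPhatQh (i : Fin n) : Phat i * Qᴴ = Qᴴ * P i :=
    conjTranspose_intertwine_of_intertwine (hQP i) (hP i) (hPhat i)
  have hKhat : IsBlockIncoherent Phat f (Qᴴ * U * K' * (Uᴴ * Q)) :=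
    IsBlockIncoherent.mul_mul hinc (fun i => mul_intertwine_of_intertwine (hPUh i) (hQP i))
      (fun i => mul_intertwine_of_intertwine (hPhatQh i) (hPU i))
  intro i
  simpa only [Matrix.mul_assoc] using hKhat i

/-- Let `{P i}` and `{P̂ i}` be Hermitian projections on two Naimark spaces,
`Q` an isometry with `P i * Q = Q * P̂ i`, and `U` a unitary commuting with every `P i`. If
`K'` is block-incoherent with index function `f`, i.e. `K' * P i = P (f i) * K' * P i`, then
`K̂ = Qᴴ U K' Uᴴ Q` is block-incoherent with respect to `{P̂ i}` with the same index function: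
`K̂ * P̂ i = P̂ (f i) * K̂ * P̂ i`. -/
theorem transported_kraus_block_incoherent
    (n d' e' : ℕ)
    (P : Fin n → Matrix (Fin d') (Fin d') ℂ)
    (Phat : Fin n → Matrix (Fin e') (Fin e') ℂ)
    (hP : ∀ i, (P i)ᴴ = P i) (hPproj : ∀ i, P i * P i = P i)
    (hPhat : ∀ i, (Phat i)ᴴ = Phat i) (hPhatproj : ∀ i, Phat i * Phat i = Phat i)
    (Q : Matrix (Fin d') (Fin e') ℂ) (hQ : Qᴴ * Q = 1)
    (hQP : ∀ i, P i * Q = Q * Phat i)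
    (U : Matrix (Fin d') (Fin d') ℂ) (hU1 : Uᴴ * U = 1) (hU2 : U * Uᴴ = 1)
    (hUP : ∀ i, U * P i = P i * U)
    (K' : Matrix (Fin d') (Fin d') ℂ) (f : Fin n → Fin n)
    (hinc : ∀ i, K' * P i = P (f i) * K' * P i) :
    ∀ i, (Qᴴ * U * K' * Uᴴ * Q) * Phat i
        = Phat (f i) * (Qᴴ * U * K' * Uᴴ * Q) * Phat i :=
  transported_kraus_block_incoherent_general n d' e' P Phat hP hPhat Q hQP U hUP K' f hinc
end

section
/- Let T (of size d'×d) and T̂ (of size d̂'×d) satisfy T† T = 1 and T̂† T̂ = 1, let Q (of size d'×d̂') satisfy Q† Q = 1, let U be a d'×d' unitary with Q T̂ = U T, and let K' be a d'×d' matrix with K' (T T†) = (T T†) K' (T T†). Then: (a) T̂† ( Q† U K' U† Q ) T̂ = T† K' T; and (b) for every d̂'×d' matrix M, T̂† ( M (1 − Q Q†) U K' U† Q ) T̂ = 0. -/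
open Matrix

/-! Writing `V := U T = Q T̂` and `A := U K' Uᴴ`, both claims are statements about `A V`.
Since `K'` preserves the range of `T`, `A` preserves the range of `V`: `A V = V (Tᴴ K' T)`.
Compressing by `V` gives (a), and `1 - Q Qᴴ` annihilates the range of `V ⊆ range Q`,
giving (b). -/

namespace Matrix

variable {R l m n : Type*}

theorem mul_eq_mul_compression_of_preserves_range [Semiring R] [Fintype m] [Fintype n]
    [DecidableEq n] {T : Matrix m n R} {L : Matrix n m R} (hLT : L * T = 1) {K : Matrix m m R}
    (hK : K * (T * L) = T * L * K * (T * L)) :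
    K * T = T * (L * K * T) :=
  calc K * T = K * (T * L) * T := by rw [Matrix.mul_assoc, Matrix.mul_assoc, hLT, Matrix.mul_one]
    _ = T * L * K * (T * L) * T := by rw [hK]
    _ = T * (L * K * T) := by simp only [Matrix.mul_assoc, hLT, Matrix.mul_one]

theorem conj_mul_eq_mul_of_mul_eq_mul [Semiring R] [StarRing R] [Fintype l] [Fintype m]
    [Fintype n] [DecidableEq m] {U : Matrix l m R} (hU : Uᴴ * U = 1) {K : Matrix m m R}
    {T : Matrix m n R} {C : Matrix n n R} (hKT : K * T = T * C) :
    U * K * Uᴴ * (U * T) = U * T * C := by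
  simp only [Matrix.mul_assoc, ← Matrix.mul_assoc Uᴴ, hU, Matrix.one_mul, hKT]

theorem conjTranspose_mul_conj_mul [Semiring R] [StarRing R] [Fintype l] [Fintype m]
    [DecidableEq m] {U : Matrix l m R} (hU : Uᴴ * U = 1) (K : Matrix m m R) (T : Matrix m n R) :
    (U * T)ᴴ * (U * K * Uᴴ) * (U * T) = Tᴴ * K * T := by
  simp only [conjTranspose_mul, Matrix.mul_assoc, ← Matrix.mul_assoc Uᴴ U, hU, Matrix.one_mul]

theorem one_sub_mul_mul_eq_zero [Ring R] [Fintype m] [Fintype n] [DecidableEq m]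
    [DecidableEq n] {Q : Matrix m n R} {L : Matrix n m R} (hLQ : L * Q = 1) :
    (1 - Q * L) * Q = 0 := by
  rw [Matrix.sub_mul, Matrix.one_mul, Matrix.mul_assoc, hLQ, Matrix.mul_one, sub_self]

end Matrix

theorem compressed_transported_kraus_general
    (d d' e' : ℕ)
    (T : Matrix (Fin d') (Fin d) ℂ) (hT : Tᴴ * T = 1)
    (That : Matrix (Fin e') (Fin d) ℂ)
    (Q : Matrix (Fin d') (Fin e') ℂ) (hQ : Qᴴ * Q = 1)
    (U : Matrix (Fin d') (Fin d') ℂ) (hU1 : Uᴴ * U = 1)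
    (hQT : Q * That = U * T)
    (K' : Matrix (Fin d') (Fin d') ℂ)
    (hsp : K' * (T * Tᴴ) = (T * Tᴴ) * K' * (T * Tᴴ)) :
    Thatᴴ * (Qᴴ * U * K' * Uᴴ * Q) * That = Tᴴ * K' * T ∧
      ∀ M : Matrix (Fin e') (Fin d') ℂ,
        Thatᴴ * (M * (1 - Q * Qᴴ) * U * K' * Uᴴ * Q) * That = 0 := by
  have hA : U * K' * Uᴴ * (Q * That) = Q * That * (Tᴴ * K' * T) := by
    rw [hQT]
    exact conj_mul_eq_mul_of_mul_eq_mul hU1 (mul_eq_mul_compression_of_preserves_range hT hsp)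
  refine ⟨?_, fun M => ?_⟩
  · calc Thatᴴ * (Qᴴ * U * K' * Uᴴ * Q) * That
          = (Q * That)ᴴ * (U * K' * Uᴴ) * (Q * That) := by
            simp only [conjTranspose_mul, Matrix.mul_assoc]
      _ = Tᴴ * K' * T := by rw [hQT, conjTranspose_mul_conj_mul hU1]
  · calc Thatᴴ * (M * (1 - Q * Qᴴ) * U * K' * Uᴴ * Q) * That
          = Thatᴴ * M * ((1 - Q * Qᴴ) * (U * K' * Uᴴ * (Q * That))) := by
            simp only [Matrix.mul_assoc]
      _ = 0 := by
        rw [hA, Matrix.mul_assoc Q, ← Matrix.mul_assoc (1 - Q * Qᴴ), one_sub_mul_mul_eq_zero hQ,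
          Matrix.zero_mul, Matrix.mul_zero]

/-- Let `T`, `T̂` be Naimark embedding isometries, `Q` an isometry, `U` a
unitary with `Q T̂ = U T`, and `K'` subspace-preserving (`K' (T Tᴴ) = (T Tᴴ) K' (T Tᴴ)`). Then
(a) `T̂ᴴ (Qᴴ U K' Uᴴ Q) T̂ = Tᴴ K' T`, and
(b) `T̂ᴴ (M (1 - Q Qᴴ) U K' Uᴴ Q) T̂ = 0` for every matrix `M`. -/
theorem compressed_transported_kraus
    (d d' e' : ℕ)
    (T : Matrix (Fin d') (Fin d) ℂ) (hT : Tᴴ * T = 1)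
    (That : Matrix (Fin e') (Fin d) ℂ) (hThat : Thatᴴ * That = 1)
    (Q : Matrix (Fin d') (Fin e') ℂ) (hQ : Qᴴ * Q = 1)
    (U : Matrix (Fin d') (Fin d') ℂ) (hU1 : Uᴴ * U = 1) (hU2 : U * Uᴴ = 1)
    (hQT : Q * That = U * T)
    (K' : Matrix (Fin d') (Fin d') ℂ)
    (hsp : K' * (T * Tᴴ) = (T * Tᴴ) * K' * (T * Tᴴ)) :
    Thatᴴ * (Qᴴ * U * K' * Uᴴ * Q) * That = Tᴴ * K' * T ∧
      ∀ M : Matrix (Fin e') (Fin d') ℂ,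
        Thatᴴ * (M * (1 - Q * Qᴴ) * U * K' * Uᴴ * Q) * That = 0 :=
  compressed_transported_kraus_general d d' e' T hT That Q hQ U hU1 hQT K' hsp
end

section
/- Let ρ and σ be positive definite d×d complex matrices with tr ρ = 1, let λ ≥ 0, and suppose ρ ≤ 2^λ · σ in the Loewner order. Then the quantum relative entropy satisfies S(ρ‖σ) := tr[ ρ (log₂ ρ − log₂ σ) ] ≤ λ, where log₂ of a positive definite matrix is defined by applying log₂ to its eigenvalues via the functional calculus. -/
/-!
The logarithm is operator monotone, so `ρ ≤ 2^λ σ` gives `log₂ ρ ≤ λ + log₂ σ`. Pairing this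
operator inequality with `ρ ≥ 0` under the trace (`tr (ρ X) ≥ 0` for `X ≥ 0`) and using
`tr ρ = 1` yields `S(ρ‖σ) ≤ λ`.
-/

open Matrix
open scoped ComplexOrder

/-- `log₂` of a Hermitian matrix, defined via the spectral decomposition by applying
`Real.logb 2` to the eigenvalues. -/
noncomputable def matLog2 {d : ℕ} (A : Matrix (Fin d) (Fin d) ℂ) (hA : A.IsHermitian) :
    Matrix (Fin d) (Fin d) ℂ :=
  (hA.eigenvectorUnitary : Matrix (Fin d) (Fin d) ℂ) *
    Matrix.diagonal (fun k => (Real.logb 2 (hA.eigenvalues k) : ℂ)) *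
    (hA.eigenvectorUnitary : Matrix (Fin d) (Fin d) ℂ)ᴴ

open scoped MatrixOrder Matrix.Norms.L2Operator

namespace Matrix

variable {n 𝕜 : Type*} [Fintype n] [DecidableEq n] [RCLike 𝕜]

lemma trace_mul_nonneg {A B : Matrix n n 𝕜} (hA : 0 ≤ A) (hB : 0 ≤ B) :
    0 ≤ (A * B).trace := by
  obtain ⟨X, rfl⟩ := CStarAlgebra.nonneg_iff_eq_star_mul_self.mp hA
  rw [mul_assoc, trace_mul_comm, mul_assoc, star_eq_conjTranspose, ← mul_assoc]
  exact (hB.posSemidef.mul_mul_conjTranspose_same X).trace_nonneg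

lemma trace_mul_le_trace_mul {A B C : Matrix n n 𝕜} (hA : 0 ≤ A) (hBC : B ≤ C) :
    (A * B).trace ≤ (A * C).trace := by
  simpa [mul_sub, trace_sub] using trace_mul_nonneg hA (sub_nonneg.mpr hBC)

end Matrix

lemma matLog2_eq_inv_log_two_smul_log {d : ℕ} (A : Matrix (Fin d) (Fin d) ℂ)
    (hA : A.IsHermitian) : matLog2 A hA = (Real.log 2)⁻¹ • CFC.log A := by
  have hcfc : matLog2 A hA = cfc (Real.logb 2) A := by
    rw [hA.cfc_eq, IsHermitian.cfc, Unitary.conjStarAlgAut_apply, matLog2, star_eq_conjTranspose]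
    rfl
  rw [hcfc, CFC.log, ← cfc_const_mul (Real.log 2)⁻¹ Real.log A
    (A.finite_real_spectrum.continuousOn _)]
  congr 1
  ext x
  rw [Real.logb, div_eq_inv_mul]

lemma matLog2_sub_le_logb_smul_one {d : ℕ} {ρ σ : Matrix (Fin d) (Fin d) ℂ} (hρ : ρ.PosDef)
    (hσ : σ.PosDef) {c : ℝ} (hc : 0 < c) (hle : ρ ≤ c • σ) :
    matLog2 ρ hρ.1 - matLog2 σ hσ.1 ≤ Real.logb 2 c • 1 := by
  have hlog : CFC.log ρ ≤ algebraMap ℝ _ (Real.log c) + CFC.log σ :=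
    calc CFC.log ρ ≤ CFC.log (c • σ) := CFC.log_le_log hle hρ.isStrictlyPositive
      _ = _ := CFC.log_smul' σ hc hσ.isStrictlyPositive
  rw [matLog2_eq_inv_log_two_smul_log, matLog2_eq_inv_log_two_smul_log, ← smul_sub]
  calc (Real.log 2)⁻¹ • (CFC.log ρ - CFC.log σ)
      ≤ (Real.log 2)⁻¹ • algebraMap ℝ _ (Real.log c) :=
        smul_le_smul_of_nonneg_left (sub_le_iff_le_add.mpr hlog) (by positivity)
    _ = Real.logb 2 c • 1 := by
        rw [Algebra.algebraMap_eq_smul_one, smul_smul, Real.logb, div_eq_inv_mul]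

theorem relative_entropy_le_of_le_rpow_smul_general
    (d : ℕ) (ρ σ : Matrix (Fin d) (Fin d) ℂ)
    (hρ : ρ.PosDef) (hσ : σ.PosDef) (hρtr : ρ.trace = 1)
    (l : ℝ)
    (hle : (((2 : ℝ) ^ l) • σ - ρ).PosSemidef) :
    (ρ * (matLog2 ρ hρ.1 - matLog2 σ hσ.1)).trace.re ≤ l := by
  have hlog : matLog2 ρ hρ.1 - matLog2 σ hσ.1 ≤ l • 1 := by
    simpa [Real.logb_rpow] using
      matLog2_sub_le_logb_smul_one hρ hσ (by positivity) (Matrix.le_iff.mpr hle)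
  have htrace : (ρ * (matLog2 ρ hρ.1 - matLog2 σ hσ.1)).trace ≤ (ρ * (l • 1)).trace :=
    trace_mul_le_trace_mul hρ.posSemidef.nonneg hlog
  rw [mul_smul_comm, mul_one, trace_smul, hρtr] at htrace
  simpa using (Complex.le_def.mp htrace).1

/-- If `ρ` and `σ` are positive definite, `tr ρ = 1`, `λ ≥ 0`, and
`ρ ≤ 2^λ • σ` in the Loewner order, then the quantum relative entropy satisfies
`S(ρ‖σ) = tr[ρ (log₂ ρ - log₂ σ)] ≤ λ`. -/
theorem relative_entropy_le_of_le_rpow_smul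
    (d : ℕ) (ρ σ : Matrix (Fin d) (Fin d) ℂ)
    (hρ : ρ.PosDef) (hσ : σ.PosDef) (hρtr : ρ.trace = 1)
    (l : ℝ) (hl : 0 ≤ l)
    (hle : (((2 : ℝ) ^ l) • σ - ρ).PosSemidef) :
    (ρ * (matLog2 ρ hρ.1 - matLog2 σ hσ.1)).trace.re ≤ l :=
  relative_entropy_le_of_le_rpow_smul_general d ρ σ hρ hσ hρtr l hle
end

section
/- Let ρ be a density matrix on ℂ^d, let A_1, …, A_n be d×d matrices with ∑_i A_i† A_i = 1, let s ≥ 0, and let τ be a density matrix on ℂ^d ⊗ ℂ^n with block decomposition τ = ∑_{i,j} τ_{i,j} ⊗ |i⟩⟨j| satisfying s·τ_{i,j} = −A_i ρ A_j† for all i ≠ j. Then the matrices δ_i := (A_i ρ A_i† + s·τ_{i,i}) / (1 + s) are each positive semidefinite, ∑_{i=1}^n tr δ_i = 1, and ∑_{i,j} (A_i ρ A_j† + s·τ_{i,j}) ⊗ |i⟩⟨j| = (1 + s)·∑_i δ_i ⊗ |i⟩⟨i|. -/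
open Matrix Kronecker
open scoped ComplexOrder

namespace Matrix

variable {m n p R : Type*}

theorem sum_trace_blockDiag [Fintype n] [Fintype p] [AddCommMonoid R]
    (M : Matrix (n × p) (n × p) R) :
    ∑ k, (blockDiag M k).trace = M.trace := by
  simp only [trace, diag, blockDiag_apply, Fintype.sum_prod_type]
  exact Finset.sum_comm

theorem PosSemidef.blockDiag [Ring R] [PartialOrder R] [StarRing R]
    {M : Matrix (n × p) (n × p) R} (hM : M.PosSemidef) (k : p) :
    (M.blockDiag k).PosSemidef :=
  hM.submatrix (·, k)

theorem sum_trace_mul_mul_conjTranspose [Fintype m] [Fintype n] [DecidableEq n] [CommSemiring R]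
    [StarRing R] {ι : Type*} [Fintype ι] {A : ι → Matrix m n R}
    (hA : ∑ i, (A i)ᴴ * A i = 1) (ρ : Matrix n n R) : ∑ i, (A i * ρ * (A i)ᴴ).trace = ρ.trace :=
  calc ∑ i, (A i * ρ * (A i)ᴴ).trace
      = ∑ i, ((A i)ᴴ * A i * ρ).trace := Finset.sum_congr rfl fun i _ => trace_mul_cycle _ _ _
    _ = ρ.trace := by rw [← trace_sum, ← Finset.sum_mul, hA, one_mul]

end Matrix

/-- Let `ρ` be a density matrix, `A 1, …, A n` measurement operators with
`∑ i, A iᴴ A i = 1`, `s ≥ 0`, and `τ` a density matrix on `ℂ^d ⊗ ℂ^n` whose blocks satisfy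
`s • τ i j = -(A i ρ A jᴴ)` for all `i ≠ j`. Then the matrices
`δ i = (1 + s)⁻¹ • (A i ρ A iᴴ + s • τ i i)` are positive semidefinite, their traces sum
to `1`, and `∑ i j, (A i ρ A jᴴ + s • τ i j) ⊗ |i⟩⟨j| = (1 + s) • ∑ i, δ i ⊗ |i⟩⟨i|`. -/
theorem sdp_diagonal_constraint_redundant
    (n d : ℕ) (ρ : Matrix (Fin d) (Fin d) ℂ) (hρ : ρ.PosSemidef) (hρtr : ρ.trace = 1)
    (A : Fin n → Matrix (Fin d) (Fin d) ℂ) (hA : ∑ i, (A i)ᴴ * A i = 1)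
    (s : ℝ) (hs : 0 ≤ s)
    (τ : Matrix (Fin d × Fin n) (Fin d × Fin n) ℂ)
    (hτ : τ.PosSemidef) (hτtr : τ.trace = 1)
    (τb : Fin n → Fin n → Matrix (Fin d) (Fin d) ℂ)
    (hτb : ∀ i j, τb i j = Matrix.of fun a b => τ (a, i) (b, j))
    (hoff : ∀ i j, i ≠ j → s • τb i j = -(A i * ρ * (A j)ᴴ))
    (δ : Fin n → Matrix (Fin d) (Fin d) ℂ)
    (hδ : ∀ i, δ i = (1 + s)⁻¹ • (A i * ρ * (A i)ᴴ + s • τb i i)) :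
    (∀ i, (δ i).PosSemidef) ∧ (∑ i, (δ i).trace = 1) ∧
      ∑ i, ∑ j, (A i * ρ * (A j)ᴴ + s • τb i j) ⊗ₖ Matrix.single i j (1 : ℂ)
        = (1 + s) • ∑ i, (δ i) ⊗ₖ Matrix.single i i (1 : ℂ) := by
  have hdiag : ∀ i, τb i i = τ.blockDiag i := fun i => hτb i i
  have hscale : ∀ i, A i * ρ * (A i)ᴴ + s • τb i i = (1 + s) • δ i := fun i => by
    rw [hδ i, smul_smul, mul_inv_cancel₀ (by positivity), one_smul]
  refine ⟨fun i => ?_, ?_, ?_⟩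
  · rw [hδ i, hdiag i]
    exact ((hρ.mul_mul_conjTranspose_same (A i)).add
      ((hτ.blockDiag i).smul hs)).smul (inv_nonneg.mpr (by positivity))
  · have htr : ∑ i, (A i * ρ * (A i)ᴴ + s • τb i i).trace = 1 + s := by
      simp_rw [trace_add, trace_smul, Finset.sum_add_distrib, ← Finset.smul_sum, hdiag,
        sum_trace_blockDiag, sum_trace_mul_mul_conjTranspose hA, hρtr, hτtr, Complex.real_smul,
        mul_one]
    simp_rw [hδ, trace_smul, ← Finset.smul_sum, htr]
    rw [Complex.real_smul, Complex.ofReal_inv, Complex.ofReal_add, Complex.ofReal_one]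
    exact inv_mul_cancel₀ (by exact_mod_cast (by positivity : (1 + s : ℝ) ≠ 0))
  · rw [Finset.smul_sum]
    refine Finset.sum_congr rfl fun i _ => ?_
    rw [Fintype.sum_eq_single i fun j hj => ?_, hscale, smul_kronecker]
    rw [hoff i j (Ne.symm hj), add_neg_cancel, zero_kronecker]
end
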